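/- Let μ_0 > 0 and κ > 0 be fixed real numbers, and define f(μ) = 2(μ-μ_0)^2(6μ+κ) / (2μ_0(6μ+κ) + (8μ+3κ)μ) for μ > 0. Then f is strictly convex on (0, ∞), i.e. f''(μ) > 0 for all μ > 0. -/

import Mathlib

/-!
Writing `f = p / q`, the quotient rule applied twice gives `f'' = F / q³` with
`F = (p'' q - p q'') q - 2 (p' q - p q') q'`. Expanding, `F` is a polynomial in `μ, μ₀, κ` all of
whose coefficients are positive, and `q > 0` for `μ > 0`, so `f'' > 0` on `(0, ∞)`.
-/

open Set Filter Topology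

theorem hasDerivAt_quotientRule {p q p' q' p'' q'' : ℝ → ℝ} {x : ℝ}
    (hp : HasDerivAt p (p' x) x) (hq : HasDerivAt q (q' x) x)
    (hp' : HasDerivAt p' (p'' x) x) (hq' : HasDerivAt q' (q'' x) x) (hqx : q x ≠ 0) :
    HasDerivAt (fun y => (p' y * q y - p y * q' y) / q y ^ 2)
      (((p'' x * q x - p x * q'' x) * q x - 2 * (p' x * q x - p x * q' x) * q' x) / q x ^ 3) x := by
  refine (((hp'.fun_mul hq).fun_sub (hp.fun_mul hq')).fun_div (hq.fun_pow 2)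
    (pow_ne_zero 2 hqx)).congr_deriv ?_
  field_simp
  ring

theorem deriv_deriv_eq_of_hasDerivAt {s : Set ℝ} (hs : IsOpen s) {f f' f'' : ℝ → ℝ}
    (hf : ∀ x ∈ s, HasDerivAt f (f' x) x) (hf' : ∀ x ∈ s, HasDerivAt f' (f'' x) x)
    {x : ℝ} (hx : x ∈ s) : deriv (deriv f) x = f'' x := by
  have hderiv : deriv f =ᶠ[𝓝 x] f' :=
    eventually_of_mem (hs.mem_nhds hx) fun y hy => (hf y hy).deriv
  rw [hderiv.deriv_eq, (hf' x hx).deriv]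

theorem strictConvexOn_of_hasDerivAt2_pos {s : Set ℝ} (hs : IsOpen s) (hconv : Convex ℝ s)
    {f f' f'' : ℝ → ℝ} (hf : ∀ x ∈ s, HasDerivAt f (f' x) x)
    (hf' : ∀ x ∈ s, HasDerivAt f' (f'' x) x) (hf'' : ∀ x ∈ s, 0 < f'' x) :
    StrictConvexOn ℝ s f := by
  refine strictConvexOn_of_deriv2_pos' hconv
    (fun x hx => (hf x hx).continuousAt.continuousWithinAt) fun x hx => ?_
  rw [Function.iterate_succ_apply', Function.iterate_one,
    deriv_deriv_eq_of_hasDerivAt hs hf hf' hx]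
  exact hf'' x hx

namespace ConvexQuotient

variable (μ₀ κ : ℝ)

def num (x : ℝ) : ℝ := 2 * (x - μ₀) ^ 2 * (6 * x + κ)

def den (x : ℝ) : ℝ := 2 * μ₀ * (6 * x + κ) + (8 * x + 3 * κ) * x

def numDeriv (x : ℝ) : ℝ := (x - μ₀) * (36 * x + 4 * κ - 12 * μ₀)

def denDeriv (x : ℝ) : ℝ := 12 * μ₀ + 16 * x + 3 * κ

def secondDerivNumer (x : ℝ) : ℝ :=
  9600 * x ^ 3 * μ₀ ^ 2 + 1600 * x ^ 3 * μ₀ * κ + 120 * x ^ 3 * κ ^ 2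
    + 4800 * x ^ 2 * μ₀ ^ 2 * κ + 240 * x ^ 2 * μ₀ * κ ^ 2 + 960 * x * μ₀ ^ 2 * κ ^ 2
    + 80 * μ₀ ^ 3 * κ ^ 2 + 100 * μ₀ ^ 2 * κ ^ 3

variable {μ₀ κ}

theorem hasDerivAt_num (x : ℝ) : HasDerivAt (num μ₀ κ) (numDeriv μ₀ κ x) x := by
  have := (((hasDerivAt_id' x).sub_const μ₀).fun_pow 2 |>.const_mul 2).fun_mul
    (((hasDerivAt_id' x).const_mul 6).add_const κ)
  exact this.congr_deriv (by unfold numDeriv; ring)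

theorem hasDerivAt_numDeriv (x : ℝ) :
    HasDerivAt (numDeriv μ₀ κ) (72 * x + 4 * κ - 48 * μ₀) x := by
  have := ((hasDerivAt_id' x).sub_const μ₀).fun_mul
    ((((hasDerivAt_id' x).const_mul 36).add_const (4 * κ)).sub_const (12 * μ₀))
  exact this.congr_deriv (by ring)

theorem hasDerivAt_den (x : ℝ) : HasDerivAt (den μ₀ κ) (denDeriv μ₀ κ x) x := by
  have := ((((hasDerivAt_id' x).const_mul 6).add_const κ).const_mul (2 * μ₀)).fun_add
    ((((hasDerivAt_id' x).const_mul 8).add_const (3 * κ)).fun_mul (hasDerivAt_id' x))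
  exact this.congr_deriv (by unfold denDeriv; ring)

theorem hasDerivAt_denDeriv (x : ℝ) : HasDerivAt (denDeriv μ₀ κ) 16 x :=
  ((((hasDerivAt_id' x).const_mul 16).const_add (12 * μ₀)).add_const (3 * κ)).congr_deriv
    (mul_one 16)

theorem den_pos (hμ₀ : 0 ≤ μ₀) (hκ : 0 ≤ κ) {x : ℝ} (hx : 0 < x) : 0 < den μ₀ κ x := by
  unfold den
  positivity

theorem secondDerivNumer_pos (hμ₀ : 0 ≤ μ₀) (hκ : 0 < κ) {x : ℝ} (hx : 0 < x) :
    0 < secondDerivNumer μ₀ κ x := by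
  unfold secondDerivNumer
  positivity

theorem quotientRule_numerator_eq (x : ℝ) :
    ((72 * x + 4 * κ - 48 * μ₀) * den μ₀ κ x - num μ₀ κ x * 16) * den μ₀ κ x
      - 2 * (numDeriv μ₀ κ x * den μ₀ κ x - num μ₀ κ x * denDeriv μ₀ κ x) * denDeriv μ₀ κ x
      = secondDerivNumer μ₀ κ x := by
  unfold num den numDeriv denDeriv secondDerivNumer
  ring

end ConvexQuotient

open ConvexQuotient

/-- The function `f(μ) = 2(μ-μ₀)²(6μ+κ) / (2μ₀(6μ+κ) + (8μ+3κ)μ)` is strictly convex on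
`(0,∞)`, with positive second derivative there. -/
theorem stmt8 (μ₀ κ : ℝ) (hμ₀ : 0 < μ₀) (hκ : 0 < κ) :
    StrictConvexOn ℝ (Set.Ioi (0 : ℝ))
        (fun μ : ℝ => 2 * (μ - μ₀) ^ 2 * (6 * μ + κ) /
          (2 * μ₀ * (6 * μ + κ) + (8 * μ + 3 * κ) * μ)) ∧
      ∀ μ : ℝ, 0 < μ →
        0 < deriv (deriv (fun μ : ℝ => 2 * (μ - μ₀) ^ 2 * (6 * μ + κ) /
          (2 * μ₀ * (6 * μ + κ) + (8 * μ + 3 * κ) * μ))) μ := by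
  have hden : ∀ x ∈ Ioi (0 : ℝ), den μ₀ κ x ≠ 0 := fun x hx => (den_pos hμ₀.le hκ.le hx).ne'
  have hf : ∀ x ∈ Ioi (0 : ℝ), HasDerivAt (fun y => num μ₀ κ y / den μ₀ κ y)
      ((numDeriv μ₀ κ x * den μ₀ κ x - num μ₀ κ x * denDeriv μ₀ κ x) / den μ₀ κ x ^ 2) x :=
    fun x hx => (hasDerivAt_num x).fun_div (hasDerivAt_den x) (hden x hx)
  have hf' : ∀ x ∈ Ioi (0 : ℝ),
      HasDerivAt (fun y => (numDeriv μ₀ κ y * den μ₀ κ y - num μ₀ κ y * denDeriv μ₀ κ y) /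
        den μ₀ κ y ^ 2) (secondDerivNumer μ₀ κ x / den μ₀ κ x ^ 3) x := fun x hx => by
    rw [← quotientRule_numerator_eq]
    exact hasDerivAt_quotientRule (p'' := fun x => 72 * x + 4 * κ - 48 * μ₀) (q'' := fun _ => 16)
      (hasDerivAt_num x) (hasDerivAt_den x) (hasDerivAt_numDeriv x) (hasDerivAt_denDeriv x)
      (hden x hx)
  have hf'' : ∀ x ∈ Ioi (0 : ℝ), 0 < secondDerivNumer μ₀ κ x / den μ₀ κ x ^ 3 := fun x hx =>
    div_pos (secondDerivNumer_pos hμ₀.le hκ hx) (pow_pos (den_pos hμ₀.le hκ.le hx) 3)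
  exact ⟨strictConvexOn_of_hasDerivAt2_pos isOpen_Ioi (convex_Ioi 0) hf hf' hf'', fun x hx =>
    (hf'' x hx).trans_eq (deriv_deriv_eq_of_hasDerivAt isOpen_Ioi hf hf' hx).symm⟩
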